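/- arXiv:1906.00470 — 4 statements merged into one kernel-verified Lean document; each statement's English description precedes it below -/
import Mathlib

section
/- For all positive integers a and b, the set S₉ = {0, a+b, 2a+b, 3a+2b, 4a+2b, 4a+3b} satisfies |S₉+S₉| ≤ |S₉-S₉| (i.e., S₉ is not sum-dominant). -/
open Finset
open scoped Pointwise

set_option maxHeartbeats 1000000 in
theorem stmt_13 (a b : ℤ) (ha : 0 < a) (hb : 0 < b) :
    ((({0, a+b, 2*a+b, 3*a+2*b, 4*a+2*b, 4*a+3*b} : Finset ℤ)) + {0, a+b, 2*a+b, 3*a+2*b, 4*a+2*b, 4*a+3*b}).card ≤ ((({0, a+b, 2*a+b, 3*a+2*b, 4*a+2*b, 4*a+3*b} : Finset ℤ)) - {0, a+b, 2*a+b, 3*a+2*b, 4*a+2*b, 4*a+3*b}).card := by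
  rcases eq_or_ne a b with rfl | hab
  · -- case b = a
    have hPsub : (({0, a+a, 2*a+a, 3*a+2*a, 4*a+2*a, 4*a+3*a} : Finset ℤ) + {0, a+a, 2*a+a, 3*a+2*a, 4*a+2*a, 4*a+3*a}) ⊆ ({0, 2*a, 3*a, 4*a, 5*a, 6*a, 7*a, 8*a, 9*a, 10*a, 11*a, 12*a, 13*a, 14*a} : Finset ℤ) := by
      rw [Finset.add_subset_iff]
      intro x hx y hy
      simp only [Finset.mem_insert, Finset.mem_singleton] at hx hy ⊢
      rcases hx with rfl|rfl|rfl|rfl|rfl|rfl <;> rcases hy with rfl|rfl|rfl|rfl|rfl|rfl <;> omega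
    have hDsub : ({(0) - (4*a+3*a), (0) - (4*a+2*a), (0) - (3*a+2*a), (a+a) - (4*a+2*a), (0) - (2*a+a), (0) - (a+a), (a+a) - (2*a+a), (0) - (0), (2*a+a) - (a+a), (a+a) - (0), (2*a+a) - (0), (4*a+2*a) - (a+a), (3*a+2*a) - (0), (4*a+2*a) - (0), (4*a+3*a) - (0)} : Finset ℤ) ⊆ ({0, a+a, 2*a+a, 3*a+2*a, 4*a+2*a, 4*a+3*a} : Finset ℤ) - {0, a+a, 2*a+a, 3*a+2*a, 4*a+2*a, 4*a+3*a} := by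
      intro x hx
      simp only [Finset.mem_insert, Finset.mem_singleton] at hx
      rcases hx with rfl|rfl|rfl|rfl|rfl|rfl|rfl|rfl|rfl|rfl|rfl|rfl|rfl|rfl|rfl <;>
        exact Finset.sub_mem_sub (by simp) (by simp)
    have hPcard : (({0, 2*a, 3*a, 4*a, 5*a, 6*a, 7*a, 8*a, 9*a, 10*a, 11*a, 12*a, 13*a, 14*a} : Finset ℤ)).card ≤ 14 := by
      have h := List.toFinset_card_le ([0, 2*a, 3*a, 4*a, 5*a, 6*a, 7*a, 8*a, 9*a, 10*a, 11*a, 12*a, 13*a, 14*a] : List ℤ)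
      simpa using h
    have hnd : ([(0) - (4*a+3*a), (0) - (4*a+2*a), (0) - (3*a+2*a), (a+a) - (4*a+2*a), (0) - (2*a+a), (0) - (a+a), (a+a) - (2*a+a), (0) - (0), (2*a+a) - (a+a), (a+a) - (0), (2*a+a) - (0), (4*a+2*a) - (a+a), (3*a+2*a) - (0), (4*a+2*a) - (0), (4*a+3*a) - (0)] : List ℤ).Nodup := by
      simp only [List.nodup_cons, List.mem_cons, List.not_mem_nil, List.mem_singleton, not_or,
        List.nodup_nil, and_true, not_false_iff, or_false]
      omega
    have hDcard : (({(0) - (4*a+3*a), (0) - (4*a+2*a), (0) - (3*a+2*a), (a+a) - (4*a+2*a), (0) - (2*a+a), (0) - (a+a), (a+a) - (2*a+a), (0) - (0), (2*a+a) - (a+a), (a+a) - (0), (2*a+a) - (0), (4*a+2*a) - (a+a), (3*a+2*a) - (0), (4*a+2*a) - (0), (4*a+3*a) - (0)} : Finset ℤ)).card = 15 := by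
      rw [show ({(0) - (4*a+3*a), (0) - (4*a+2*a), (0) - (3*a+2*a), (a+a) - (4*a+2*a), (0) - (2*a+a), (0) - (a+a), (a+a) - (2*a+a), (0) - (0), (2*a+a) - (a+a), (a+a) - (0), (2*a+a) - (0), (4*a+2*a) - (a+a), (3*a+2*a) - (0), (4*a+2*a) - (0), (4*a+3*a) - (0)} : Finset ℤ) = ([(0) - (4*a+3*a), (0) - (4*a+2*a), (0) - (3*a+2*a), (a+a) - (4*a+2*a), (0) - (2*a+a), (0) - (a+a), (a+a) - (2*a+a), (0) - (0), (2*a+a) - (a+a), (a+a) - (0), (2*a+a) - (0), (4*a+2*a) - (a+a), (3*a+2*a) - (0), (4*a+2*a) - (0), (4*a+3*a) - (0)] : List ℤ).toFinset by simp]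
      rw [List.toFinset_card_of_nodup hnd]
      rfl
    calc (({0, a+a, 2*a+a, 3*a+2*a, 4*a+2*a, 4*a+3*a} : Finset ℤ) + {0, a+a, 2*a+a, 3*a+2*a, 4*a+2*a, 4*a+3*a}).card
        ≤ 14 := le_trans (Finset.card_le_card hPsub) hPcard
      _ ≤ 15 := by norm_num
      _ ≤ _ := hDcard ▸ Finset.card_le_card hDsub
  · -- case a ≠ b
    have hPsub : (({0, a+b, 2*a+b, 3*a+2*b, 4*a+2*b, 4*a+3*b} : Finset ℤ) + {0, a+b, 2*a+b, 3*a+2*b, 4*a+2*b, 4*a+3*b}) ⊆ ({0, a + b, 2*a + b, 2*a + 2*b, 3*a + 2*b, 4*a + 2*b, 4*a + 3*b, 5*a + 3*b, 5*a + 4*b, 6*a + 3*b, 6*a + 4*b, 7*a + 4*b, 7*a + 5*b, 8*a + 4*b, 8*a + 5*b, 8*a + 6*b} : Finset ℤ) := by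
      rw [Finset.add_subset_iff]
      intro x hx y hy
      simp only [Finset.mem_insert, Finset.mem_singleton] at hx hy ⊢
      rcases hx with rfl|rfl|rfl|rfl|rfl|rfl <;> rcases hy with rfl|rfl|rfl|rfl|rfl|rfl <;> omega
    have hDsub : ({(0) - (4*a+3*b), (0) - (4*a+2*b), (0) - (3*a+2*b), (a+b) - (4*a+2*b), (2*a+b) - (4*a+3*b), (0) - (2*a+b), (0) - (a+b), (a+b) - (2*a+b), (4*a+2*b) - (4*a+3*b), (0) - (0), (4*a+3*b) - (4*a+2*b), (2*a+b) - (a+b), (a+b) - (0), (2*a+b) - (0), (4*a+3*b) - (2*a+b), (4*a+2*b) - (a+b), (3*a+2*b) - (0), (4*a+2*b) - (0), (4*a+3*b) - (0)} : Finset ℤ) ⊆ ({0, a+b, 2*a+b, 3*a+2*b, 4*a+2*b, 4*a+3*b} : Finset ℤ) - {0, a+b, 2*a+b, 3*a+2*b, 4*a+2*b, 4*a+3*b} := by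
      intro x hx
      simp only [Finset.mem_insert, Finset.mem_singleton] at hx
      rcases hx with rfl|rfl|rfl|rfl|rfl|rfl|rfl|rfl|rfl|rfl|rfl|rfl|rfl|rfl|rfl|rfl|rfl|rfl|rfl <;>
        exact Finset.sub_mem_sub (by simp) (by simp)
    have hPcard : (({0, a + b, 2*a + b, 2*a + 2*b, 3*a + 2*b, 4*a + 2*b, 4*a + 3*b, 5*a + 3*b, 5*a + 4*b, 6*a + 3*b, 6*a + 4*b, 7*a + 4*b, 7*a + 5*b, 8*a + 4*b, 8*a + 5*b, 8*a + 6*b} : Finset ℤ)).card ≤ 16 := by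
      have h := List.toFinset_card_le ([0, a + b, 2*a + b, 2*a + 2*b, 3*a + 2*b, 4*a + 2*b, 4*a + 3*b, 5*a + 3*b, 5*a + 4*b, 6*a + 3*b, 6*a + 4*b, 7*a + 4*b, 7*a + 5*b, 8*a + 4*b, 8*a + 5*b, 8*a + 6*b] : List ℤ)
      simpa using h
    have hnd : ([(0) - (4*a+3*b), (0) - (4*a+2*b), (0) - (3*a+2*b), (a+b) - (4*a+2*b), (2*a+b) - (4*a+3*b), (0) - (2*a+b), (0) - (a+b), (a+b) - (2*a+b), (4*a+2*b) - (4*a+3*b), (0) - (0), (4*a+3*b) - (4*a+2*b), (2*a+b) - (a+b), (a+b) - (0), (2*a+b) - (0), (4*a+3*b) - (2*a+b), (4*a+2*b) - (a+b), (3*a+2*b) - (0), (4*a+2*b) - (0), (4*a+3*b) - (0)] : List ℤ).Nodup := by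
      simp only [List.nodup_cons, List.mem_cons, List.not_mem_nil, List.mem_singleton, not_or,
        List.nodup_nil, and_true, not_false_iff, or_false]
      omega
    have hDcard : (({(0) - (4*a+3*b), (0) - (4*a+2*b), (0) - (3*a+2*b), (a+b) - (4*a+2*b), (2*a+b) - (4*a+3*b), (0) - (2*a+b), (0) - (a+b), (a+b) - (2*a+b), (4*a+2*b) - (4*a+3*b), (0) - (0), (4*a+3*b) - (4*a+2*b), (2*a+b) - (a+b), (a+b) - (0), (2*a+b) - (0), (4*a+3*b) - (2*a+b), (4*a+2*b) - (a+b), (3*a+2*b) - (0), (4*a+2*b) - (0), (4*a+3*b) - (0)} : Finset ℤ)).card = 19 := by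
      rw [show ({(0) - (4*a+3*b), (0) - (4*a+2*b), (0) - (3*a+2*b), (a+b) - (4*a+2*b), (2*a+b) - (4*a+3*b), (0) - (2*a+b), (0) - (a+b), (a+b) - (2*a+b), (4*a+2*b) - (4*a+3*b), (0) - (0), (4*a+3*b) - (4*a+2*b), (2*a+b) - (a+b), (a+b) - (0), (2*a+b) - (0), (4*a+3*b) - (2*a+b), (4*a+2*b) - (a+b), (3*a+2*b) - (0), (4*a+2*b) - (0), (4*a+3*b) - (0)} : Finset ℤ) = ([(0) - (4*a+3*b), (0) - (4*a+2*b), (0) - (3*a+2*b), (a+b) - (4*a+2*b), (2*a+b) - (4*a+3*b), (0) - (2*a+b), (0) - (a+b), (a+b) - (2*a+b), (4*a+2*b) - (4*a+3*b), (0) - (0), (4*a+3*b) - (4*a+2*b), (2*a+b) - (a+b), (a+b) - (0), (2*a+b) - (0), (4*a+3*b) - (2*a+b), (4*a+2*b) - (a+b), (3*a+2*b) - (0), (4*a+2*b) - (0), (4*a+3*b) - (0)] : List ℤ).toFinset by simp]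
      rw [List.toFinset_card_of_nodup hnd]
      rfl
    calc (({0, a+b, 2*a+b, 3*a+2*b, 4*a+2*b, 4*a+3*b} : Finset ℤ) + {0, a+b, 2*a+b, 3*a+2*b, 4*a+2*b, 4*a+3*b}).card
        ≤ 16 := le_trans (Finset.card_le_card hPsub) hPcard
      _ ≤ 19 := by norm_num
      _ ≤ _ := hDcard ▸ Finset.card_le_card hDsub
end

section
/- For all positive integers a and b, the set S₁₀ = {0, a+b, 3a+2b, 4a+3b, 5a+3b, 5a+4b} satisfies |S₁₀+S₁₀| ≤ |S₁₀-S₁₀| (i.e., S₁₀ is not sum-dominant). -/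
open Finset
open scoped Pointwise

theorem stmt_14 (a b : ℤ) (ha : 0 < a) (hb : 0 < b) :
    ((({0, a+b, 3*a+2*b, 4*a+3*b, 5*a+3*b, 5*a+4*b} : Finset ℤ)) + {0, a+b, 3*a+2*b, 4*a+3*b, 5*a+3*b, 5*a+4*b}).card ≤ ((({0, a+b, 3*a+2*b, 4*a+3*b, 5*a+3*b, 5*a+4*b} : Finset ℤ)) - {0, a+b, 3*a+2*b, 4*a+3*b, 5*a+3*b, 5*a+4*b}).card := by
  set S : Finset ℤ := {0, a+b, 3*a+2*b, 4*a+3*b, 5*a+3*b, 5*a+4*b} with hS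
  -- The 17 possible sums
  have hP : S + S ⊆ ([0, a+b, 2*a+2*b, 3*a+2*b, 4*a+3*b, 5*a+3*b, 5*a+4*b,
      6*a+4*b, 6*a+5*b, 7*a+5*b, 8*a+5*b, 8*a+6*b, 9*a+6*b, 9*a+7*b,
      10*a+6*b, 10*a+7*b, 10*a+8*b] : List ℤ).toFinset := by
    intro x hx
    simp only [hS, Finset.mem_add, Finset.mem_insert, Finset.mem_singleton] at hx
    simp only [List.toFinset_cons, List.toFinset_nil, Finset.mem_insert, Finset.mem_singleton, Finset.notMem_empty, or_false]
    omega
  -- 17 distinct differences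
  have hU : (([-(5*a+3*b), -(4*a+3*b), -(4*a+2*b), -(3*a+2*b), -(2*a+2*b), -(2*a+b),
      -(a+b), -a, 0, a, a+b, 2*a+b, 2*a+2*b, 3*a+2*b, 4*a+2*b, 4*a+3*b,
      5*a+3*b] : List ℤ).toFinset ⊆ S - S) := by
    intro x hx
    simp only [List.toFinset_cons, List.toFinset_nil, Finset.mem_insert, Finset.mem_singleton, Finset.notMem_empty, or_false] at hx
    simp only [hS, Finset.mem_sub, Finset.mem_insert, Finset.mem_singleton]
    rcases hx with h|h|h|h|h|h|h|h|h|h|h|h|h|h|h|h|h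
    · exact ⟨0, Or.inl rfl, 5*a+3*b, by tauto, by omega⟩
    · exact ⟨0, Or.inl rfl, 4*a+3*b, by tauto, by omega⟩
    · exact ⟨a+b, by tauto, 5*a+3*b, by tauto, by omega⟩
    · exact ⟨0, Or.inl rfl, 3*a+2*b, by tauto, by omega⟩
    · exact ⟨3*a+2*b, by tauto, 5*a+4*b, by tauto, by omega⟩
    · exact ⟨a+b, by tauto, 3*a+2*b, by tauto, by omega⟩
    · exact ⟨0, Or.inl rfl, a+b, by tauto, by omega⟩
    · exact ⟨4*a+3*b, by tauto, 5*a+3*b, by tauto, by omega⟩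
    · exact ⟨0, Or.inl rfl, 0, Or.inl rfl, by omega⟩
    · exact ⟨5*a+3*b, by tauto, 4*a+3*b, by tauto, by omega⟩
    · exact ⟨a+b, by tauto, 0, Or.inl rfl, by omega⟩
    · exact ⟨3*a+2*b, by tauto, a+b, by tauto, by omega⟩
    · exact ⟨5*a+4*b, by tauto, 3*a+2*b, by tauto, by omega⟩
    · exact ⟨3*a+2*b, by tauto, 0, Or.inl rfl, by omega⟩
    · exact ⟨5*a+3*b, by tauto, a+b, by tauto, by omega⟩
    · exact ⟨4*a+3*b, by tauto, 0, Or.inl rfl, by omega⟩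
    · exact ⟨5*a+3*b, by tauto, 0, Or.inl rfl, by omega⟩
  have h1 : (S + S).card ≤ 17 := by
    refine (Finset.card_le_card hP).trans ?_
    exact (List.toFinset_card_le _)
  have hnd : ([-(5*a+3*b), -(4*a+3*b), -(4*a+2*b), -(3*a+2*b), -(2*a+2*b), -(2*a+b),
      -(a+b), -a, 0, a, a+b, 2*a+b, 2*a+2*b, 3*a+2*b, 4*a+2*b, 4*a+3*b,
      5*a+3*b] : List ℤ).Nodup := by
    simp only [List.nodup_cons, List.mem_cons, List.not_mem_nil, List.nodup_nil, or_false,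
      and_true, List.mem_singleton]
    push_neg
    repeat' apply And.intro
    all_goals first | omega | trivial
  have h2 : 17 ≤ (S - S).card := by
    refine le_trans ?_ (Finset.card_le_card hU)
    rw [List.toFinset_card_of_nodup hnd]
    norm_num
  exact le_trans h1 h2
end

section
/- For all positive integers a and b, the set S₁₁ = {0, a, a+b, 2a+b, 3a+2b, 4a+2b} satisfies |S₁₁+S₁₁| ≤ |S₁₁-S₁₁| (i.e., S₁₁ is not sum-dominant). -/
open Finset
open scoped Pointwise

set_option maxHeartbeats 1000000 in
/-- Every element of `S+S` other than `2a+2b`, shifted down by `4a+2b`, lies in `S-S`. -/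
lemma key_aux (a b x : ℤ)
    (hx : x ∈ (({0, a, a+b, 2*a+b, 3*a+2*b, 4*a+2*b} : Finset ℤ))
      + {0, a, a+b, 2*a+b, 3*a+2*b, 4*a+2*b})
    (hne : x ≠ 2*a+2*b) :
    x - (4*a+2*b) ∈ (({0, a, a+b, 2*a+b, 3*a+2*b, 4*a+2*b} : Finset ℤ))
      - {0, a, a+b, 2*a+b, 3*a+2*b, 4*a+2*b} := by
  rw [Finset.mem_add] at hx
  obtain ⟨u, hu, v, hv, rfl⟩ := hx
  simp only [Finset.mem_insert, Finset.mem_singleton] at hu hv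
  apply Finset.mem_sub.mpr
  rcases hu with hu | hu | hu | hu | hu | hu <;>
    rcases hv with hv | hv | hv | hv | hv | hv <;>
      first
      | exact absurd (by omega) hne
      | (refine ⟨0, ?_, 4*a+2*b, ?_, by omega⟩ <;> simp)
      | (refine ⟨0, ?_, 3*a+2*b, ?_, by omega⟩ <;> simp)
      | (refine ⟨a+b, ?_, 4*a+2*b, ?_, by omega⟩ <;> simp)
      | (refine ⟨0, ?_, 2*a+b, ?_, by omega⟩ <;> simp)
      | (refine ⟨0, ?_, a, ?_, by omega⟩ <;> simp)
      | (refine ⟨0, ?_, 0, ?_, by omega⟩ <;> simp)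
      | (refine ⟨a, ?_, 3*a+2*b, ?_, by omega⟩ <;> simp)
      | (refine ⟨0, ?_, a+b, ?_, by omega⟩ <;> simp)
      | (refine ⟨a, ?_, 0, ?_, by omega⟩ <;> simp)
      | (refine ⟨a+b, ?_, a, ?_, by omega⟩ <;> simp)
      | (refine ⟨a+b, ?_, 0, ?_, by omega⟩ <;> simp)
      | (refine ⟨2*a+b, ?_, 0, ?_, by omega⟩ <;> simp)
      | (refine ⟨3*a+2*b, ?_, a, ?_, by omega⟩ <;> simp)
      | (refine ⟨3*a+2*b, ?_, 0, ?_, by omega⟩ <;> simp)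
      | (refine ⟨4*a+2*b, ?_, 0, ?_, by omega⟩ <;> simp)

/-- If `4a+b ∈ S+S` and `a ≠ b`, then necessarily `4a+b = 2a+2b`. -/
lemma key_aux2 (a b y : ℤ) (ha : 0 < a) (hb : 0 < b) (hab : a ≠ b)
    (hy : y ∈ (({0, a, a+b, 2*a+b, 3*a+2*b, 4*a+2*b} : Finset ℤ))
      + {0, a, a+b, 2*a+b, 3*a+2*b, 4*a+2*b})
    (h4 : y = 4*a+b) : y = 2*a+2*b := by
  rw [Finset.mem_add] at hy
  obtain ⟨u, hu, v, hv, rfl⟩ := hy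
  simp only [Finset.mem_insert, Finset.mem_singleton] at hu hv
  omega

theorem stmt_15 (a b : ℤ) (ha : 0 < a) (hb : 0 < b) :
    ((({0, a, a+b, 2*a+b, 3*a+2*b, 4*a+2*b} : Finset ℤ)) + {0, a, a+b, 2*a+b, 3*a+2*b, 4*a+2*b}).card ≤ ((({0, a, a+b, 2*a+b, 3*a+2*b, 4*a+2*b} : Finset ℤ)) - {0, a, a+b, 2*a+b, 3*a+2*b, 4*a+2*b}).card := by
  by_cases h : -(2*a) ∈ (({0, a, a+b, 2*a+b, 3*a+2*b, 4*a+2*b} : Finset ℤ))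
      - {0, a, a+b, 2*a+b, 3*a+2*b, 4*a+2*b}
  · apply Finset.card_le_card_of_injOn (fun x => x - (4*a+2*b))
    · intro x hx
      by_cases hx2 : x = 2*a+2*b
      · dsimp only
        rw [show x - (4*a+2*b) = -(2*a) by rw [hx2]; ring]
        exact h
      · exact key_aux a b x hx hx2
    · intro x _ y _ hxy
      dsimp only at hxy
      omega
  · have hab : a ≠ b := by
      intro h'
      exact h (Finset.mem_sub.mpr ⟨a, by simp, 2*a+b, by simp, by omega⟩)
    apply Finset.card_le_card_of_injOn
      (fun x => if x = 2*a+2*b then -b else x - (4*a+2*b))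
    · intro x hx
      dsimp only
      split_ifs with hx2
      · exact Finset.mem_sub.mpr ⟨a, by simp, a+b, by simp, by ring⟩
      · exact key_aux a b x hx hx2
    · intro x hx y hy hxy
      dsimp only at hxy
      split_ifs at hxy with h1 h2 h2
      · omega
      · exfalso
        have hy4 : y = 4*a+b := by omega
        exact h2 (key_aux2 a b y ha hb hab hy hy4)
      · exfalso
        have hx4 : x = 4*a+b := by omega
        exact h1 (key_aux2 a b x ha hb hab hx hx4)
      · omega
end

section
/- For all positive integers a and b, the set S₁₅ = {0, a, 2a+b, 3a+b, 3a+2b, 4a+2b} satisfies |S₁₅+S₁₅| ≤ |S₁₅-S₁₅| (i.e., S₁₅ is not sum-dominant). -/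
open Finset
open scoped Pointwise

private lemma key (S : Finset ℤ) (L M : List ℤ) (h1 : S + S ⊆ L.toFinset)
    (h2 : M.toFinset ⊆ S - S) (h3 : M.Nodup) (h4 : L.length ≤ M.length) :
    (S + S).card ≤ (S - S).card :=
  calc (S + S).card ≤ L.toFinset.card := Finset.card_le_card h1
    _ ≤ L.length := L.toFinset_card_le
    _ ≤ M.length := h4
    _ = M.toFinset.card := (List.toFinset_card_of_nodup h3).symm
    _ ≤ (S - S).card := Finset.card_le_card h2

set_option maxHeartbeats 1000000 in
theorem stmt_16 (a b : ℤ) (ha : 0 < a) (hb : 0 < b) :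
    ((({0, a, 2*a+b, 3*a+b, 3*a+2*b, 4*a+2*b} : Finset ℤ)) + {0, a, 2*a+b, 3*a+b, 3*a+2*b, 4*a+2*b}).card ≤ ((({0, a, 2*a+b, 3*a+b, 3*a+2*b, 4*a+2*b} : Finset ℤ)) - {0, a, 2*a+b, 3*a+b, 3*a+2*b, 4*a+2*b}).card := by
  rcases eq_or_ne a b with h | hab
  · apply key _ [0, a, 2*a, 3*a, 4*a, 5*a, 6*a, 7*a, 8*a, 9*a, 10*a, 11*a, 12*a] [0, a, -a, 2*a, -(2*a), 3*a, -(3*a), 4*a, -(4*a), 5*a, -(5*a), 6*a, -(6*a)]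
    · intro x hx
      rw [Finset.mem_add] at hx
      obtain ⟨y, hy, z, hz, rfl⟩ := hx
      simp only [Finset.mem_insert, Finset.mem_singleton] at hy hz
      simp only [List.mem_toFinset, List.mem_cons, List.not_mem_nil, or_false]
      omega
    · intro x hx
      simp only [List.mem_toFinset, List.mem_cons, List.not_mem_nil, or_false] at hx
      rcases hx with h1|h1|h1|h1|h1|h1|h1|h1|h1|h1|h1|h1|h1
      · rw [h1, Finset.mem_sub]
        exact ⟨(0 : ℤ), by simp, (0 : ℤ), by simp, by omega⟩
      · rw [h1, Finset.mem_sub]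
        exact ⟨(a : ℤ), by simp, (0 : ℤ), by simp, by omega⟩
      · rw [h1, Finset.mem_sub]
        exact ⟨(0 : ℤ), by simp, (a : ℤ), by simp, by omega⟩
      · rw [h1, Finset.mem_sub]
        exact ⟨(2*a+b : ℤ), by simp, (a : ℤ), by simp, by omega⟩
      · rw [h1, Finset.mem_sub]
        exact ⟨(a : ℤ), by simp, (2*a+b : ℤ), by simp, by omega⟩
      · rw [h1, Finset.mem_sub]
        exact ⟨(2*a+b : ℤ), by simp, (0 : ℤ), by simp, by omega⟩
      · rw [h1, Finset.mem_sub]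
        exact ⟨(0 : ℤ), by simp, (2*a+b : ℤ), by simp, by omega⟩
      · rw [h1, Finset.mem_sub]
        exact ⟨(3*a+b : ℤ), by simp, (0 : ℤ), by simp, by omega⟩
      · rw [h1, Finset.mem_sub]
        exact ⟨(0 : ℤ), by simp, (3*a+b : ℤ), by simp, by omega⟩
      · rw [h1, Finset.mem_sub]
        exact ⟨(3*a+2*b : ℤ), by simp, (0 : ℤ), by simp, by omega⟩
      · rw [h1, Finset.mem_sub]
        exact ⟨(0 : ℤ), by simp, (3*a+2*b : ℤ), by simp, by omega⟩
      · rw [h1, Finset.mem_sub]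
        exact ⟨(4*a+2*b : ℤ), by simp, (0 : ℤ), by simp, by omega⟩
      · rw [h1, Finset.mem_sub]
        exact ⟨(0 : ℤ), by simp, (4*a+2*b : ℤ), by simp, by omega⟩
    · simp only [List.nodup_cons, List.mem_cons, List.not_mem_nil, or_false, not_or,
        List.nodup_nil, and_true, not_false_eq_true, true_and]
      omega
    · norm_num
  · apply key _ [0, a, 2*a, 2*a+b, 3*a+b, 4*a+b, 3*a+2*b, 4*a+2*b, 5*a+2*b, 6*a+2*b, 5*a+3*b, 6*a+3*b, 7*a+3*b, 6*a+4*b, 7*a+4*b, 8*a+4*b] [0, a, -a, b, -b, a+b, -(a+b), 2*a+b, -(2*a+b), 2*a+2*b, -(2*a+2*b), 3*a+b, -(3*a+b), 3*a+2*b, -(3*a+2*b), 4*a+2*b, -(4*a+2*b)]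
    · intro x hx
      rw [Finset.mem_add] at hx
      obtain ⟨y, hy, z, hz, rfl⟩ := hx
      simp only [Finset.mem_insert, Finset.mem_singleton] at hy hz
      simp only [List.mem_toFinset, List.mem_cons, List.not_mem_nil, or_false]
      omega
    · intro x hx
      simp only [List.mem_toFinset, List.mem_cons, List.not_mem_nil, or_false] at hx
      rcases hx with h1|h1|h1|h1|h1|h1|h1|h1|h1|h1|h1|h1|h1|h1|h1|h1|h1
      · rw [h1, Finset.mem_sub]
        exact ⟨(0 : ℤ), by simp, (0 : ℤ), by simp, by omega⟩
      · rw [h1, Finset.mem_sub]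
        exact ⟨(a : ℤ), by simp, (0 : ℤ), by simp, by omega⟩
      · rw [h1, Finset.mem_sub]
        exact ⟨(0 : ℤ), by simp, (a : ℤ), by simp, by omega⟩
      · rw [h1, Finset.mem_sub]
        exact ⟨(3*a+2*b : ℤ), by simp, (3*a+b : ℤ), by simp, by omega⟩
      · rw [h1, Finset.mem_sub]
        exact ⟨(3*a+b : ℤ), by simp, (3*a+2*b : ℤ), by simp, by omega⟩
      · rw [h1, Finset.mem_sub]
        exact ⟨(2*a+b : ℤ), by simp, (a : ℤ), by simp, by omega⟩
      · rw [h1, Finset.mem_sub]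
        exact ⟨(a : ℤ), by simp, (2*a+b : ℤ), by simp, by omega⟩
      · rw [h1, Finset.mem_sub]
        exact ⟨(2*a+b : ℤ), by simp, (0 : ℤ), by simp, by omega⟩
      · rw [h1, Finset.mem_sub]
        exact ⟨(0 : ℤ), by simp, (2*a+b : ℤ), by simp, by omega⟩
      · rw [h1, Finset.mem_sub]
        exact ⟨(3*a+2*b : ℤ), by simp, (a : ℤ), by simp, by omega⟩
      · rw [h1, Finset.mem_sub]
        exact ⟨(a : ℤ), by simp, (3*a+2*b : ℤ), by simp, by omega⟩
      · rw [h1, Finset.mem_sub]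
        exact ⟨(3*a+b : ℤ), by simp, (0 : ℤ), by simp, by omega⟩
      · rw [h1, Finset.mem_sub]
        exact ⟨(0 : ℤ), by simp, (3*a+b : ℤ), by simp, by omega⟩
      · rw [h1, Finset.mem_sub]
        exact ⟨(3*a+2*b : ℤ), by simp, (0 : ℤ), by simp, by omega⟩
      · rw [h1, Finset.mem_sub]
        exact ⟨(0 : ℤ), by simp, (3*a+2*b : ℤ), by simp, by omega⟩
      · rw [h1, Finset.mem_sub]
        exact ⟨(4*a+2*b : ℤ), by simp, (0 : ℤ), by simp, by omega⟩
      · rw [h1, Finset.mem_sub]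
        exact ⟨(0 : ℤ), by simp, (4*a+2*b : ℤ), by simp, by omega⟩
    · simp only [List.nodup_cons, List.mem_cons, List.not_mem_nil, or_false, not_or,
        List.nodup_nil, and_true, not_false_eq_true, true_and]
      omega
    · norm_num
end
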